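/- Let Z be a random variable on a discrete probability space with finite range 𝒵, let ρ be a random state on a finite-dimensional complex Hilbert space defined on the same probability space, and let F be a two-universal random function on 𝒵 with finite range 𝒮, chosen independently of the pair (Z, ρ). Writing ρ_z := [ρ | Z = z], the following identity holds: E_F[ Σ_{s∈𝒮} Pr[F(Z)=s]² [ρ | F(Z)=s]² ] = Σ_{z,z'∈𝒵} P_Z(z) P_Z(z') ρ_z ρ_{z'} Pr[F(z) = F(z')], where both sides are operators (terms with zero probability are taken to be 0). -/

import Mathlib

open Matrix
open scoped Kronecker ComplexOrder

noncomputable section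

/-- A density operator: positive semidefinite with trace one. -/
def IsDensityOp {d : Type*} [Fintype d] [DecidableEq d] (ρ : Matrix d d ℂ) : Prop :=
  ρ.PosSemidef ∧ ρ.trace = 1

/-- The operator absolute value `|A| = (A Aᴴ)^(1/2)`. -/
noncomputable def matAbs {d : Type*} [Fintype d] [DecidableEq d] (A : Matrix d d ℂ) :
    Matrix d d ℂ :=
  (Matrix.posSemidef_self_mul_conjTranspose A).1.eigenvectorUnitary.1 *
    diagonal ((↑) ∘ (√·) ∘ (Matrix.posSemidef_self_mul_conjTranspose A).1.eigenvalues) *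
    (star (Matrix.posSemidef_self_mul_conjTranspose A).1.eigenvectorUnitary : Matrix d d ℂ)

/-- Trace distance `δ(ρ,σ) = (1/2) tr|ρ-σ|`. -/
noncomputable def traceDist {d : Type*} [Fintype d] [DecidableEq d]
    (ρ σ : Matrix d d ℂ) : ℝ :=
  (1 / 2) * (matAbs (ρ - σ)).trace.re

/-- Squared Hilbert-Schmidt distance `Δ(ρ,σ) = tr((ρ-σ)²)`. -/
noncomputable def hsDistSq {d : Type*} [Fintype d] [DecidableEq d]
    (ρ σ : Matrix d d ℂ) : ℝ :=
  ((ρ - σ) * (ρ - σ)).trace.re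

/-- Expectation of a random state. -/
noncomputable def expState {Ω d : Type*} [Fintype d]
    (P : Ω → ℝ) (ρ : Ω → Matrix d d ℂ) : Matrix d d ℂ :=
  ∑' ω, P ω • ρ ω

/-- Probability of an event. -/
noncomputable def prEvent {Ω : Type*} (P : Ω → ℝ) (E : Set Ω) : ℝ :=
  ∑' ω, E.indicator P ω

/-- Conditional expectation `[ρ | E]` of a random state given an event. -/
noncomputable def condExpState {Ω d : Type*} [Fintype d]
    (P : Ω → ℝ) (ρ : Ω → Matrix d d ℂ) (E : Set Ω) : Matrix d d ℂ :=
  (prEvent P E)⁻¹ • ∑' ω, E.indicator (fun ω => P ω • ρ ω) ω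

/-- The classical state `|x⟩⟨x|`. -/
noncomputable def classicalState {𝒳 : Type*} [Fintype 𝒳] [DecidableEq 𝒳] (x : 𝒳) :
    Matrix 𝒳 𝒳 ℂ :=
  Matrix.single x x 1

/-- The fully mixed state on `𝒳`. -/
noncomputable def uniformState (𝒳 : Type*) [Fintype 𝒳] [DecidableEq 𝒳] : Matrix 𝒳 𝒳 ℂ :=
  (Fintype.card 𝒳 : ℂ)⁻¹ • (1 : Matrix 𝒳 𝒳 ℂ)

/-- Non-uniformity `d(X|ρ) = δ([{X} ⊗ ρ], [{U}] ⊗ [ρ])`. -/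
noncomputable def nonUnif {Ω 𝒳 d : Type*} [Fintype 𝒳] [DecidableEq 𝒳]
    [Fintype d] [DecidableEq d]
    (P : Ω → ℝ) (X : Ω → 𝒳) (ρ : Ω → Matrix d d ℂ) : ℝ :=
  traceDist (expState P (fun ω => classicalState (X ω) ⊗ₖ ρ ω))
    (uniformState 𝒳 ⊗ₖ expState P ρ)

/-- `D(X|ρ) = Δ([{X} ⊗ ρ], [{U}] ⊗ [ρ])`. -/
noncomputable def DNonUnif {Ω 𝒳 d : Type*} [Fintype 𝒳] [DecidableEq 𝒳]
    [Fintype d] [DecidableEq d]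
    (P : Ω → ℝ) (X : Ω → 𝒳) (ρ : Ω → Matrix d d ℂ) : ℝ :=
  hsDistSq (expState P (fun ω => classicalState (X ω) ⊗ₖ ρ ω))
    (uniformState 𝒳 ⊗ₖ expState P ρ)

/-- Rényi entropy of order 0: `log₂ rank ρ`. -/
noncomputable def renyiS0 {d : Type*} [Fintype d] [DecidableEq d] (ρ : Matrix d d ℂ) : ℝ :=
  Real.logb 2 (ρ.rank)

/-- Rényi entropy of order 2: `-log₂ tr(ρ²)`. -/
noncomputable def renyiS2 {d : Type*} [Fintype d] [DecidableEq d] (ρ : Matrix d d ℂ) : ℝ :=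
  -Real.logb 2 ((ρ * ρ).trace.re)

/-- Maximal eigenvalue of a Hermitian matrix. -/
noncomputable def lambdaMax {d : Type*} [Fintype d] [DecidableEq d] (ρ : Matrix d d ℂ) : ℝ :=
  if h : ρ.IsHermitian then ⨆ i, h.eigenvalues i else 0

/-- Von Neumann entropy `S(ρ) = -tr(ρ log₂ ρ)` (in bits). -/
noncomputable def vnEntropy {d : Type*} [Fintype d] [DecidableEq d] (ρ : Matrix d d ℂ) : ℝ :=
  if h : ρ.IsHermitian then -∑ i, h.eigenvalues i * Real.logb 2 (h.eigenvalues i) else 0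

/-- Smooth Rényi entropy of order 0. -/
noncomputable def smoothS0 {d : Type*} [Fintype d] [DecidableEq d]
    (ε : ℝ) (ρ : Matrix d d ℂ) : ℝ :=
  sInf {x : ℝ | ∃ σ : Matrix d d ℂ,
    IsDensityOp σ ∧ traceDist ρ σ ≤ ε ∧ x = Real.logb 2 (σ.rank)}

/-- Smooth Rényi entropy of order ∞. -/
noncomputable def smoothSinf {d : Type*} [Fintype d] [DecidableEq d]
    (ε : ℝ) (ρ : Matrix d d ℂ) : ℝ :=
  sSup {x : ℝ | ∃ σ : Matrix d d ℂ,
    IsDensityOp σ ∧ traceDist ρ σ ≤ ε ∧ x = -Real.logb 2 (lambdaMax σ)}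

/-!
Write `A z = Pr[Z = z] ρ_z` for the unnormalised conditional states. For a fixed `F`, the
unnormalised state `Pr[F(Z) = s] [ρ | F(Z) = s]` is the sum of the `A z` over the fibre
`F z = s`; squaring and summing over `s` gives `Σ_{z,z'} [F z = F z'] A z A z'`, and averaging
over `F` turns the indicator into `Pr[F(z) = F(z')]`.
-/
lemma Summable.of_tsum_ne_zero {ι α : Type*} [AddCommMonoid α] [TopologicalSpace α] {f : ι → α}
    (h : ∑' i, f i ≠ 0) : Summable f :=
  not_imp_comm.1 tsum_eq_zero_of_not_summable h

namespace Matrix.PosSemidef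

variable {n 𝕜 : Type*} [RCLike 𝕜] {A : Matrix n n 𝕜}

lemma norm_apply_sq_le (hA : A.PosSemidef) (i j : n) :
    ‖A i j‖ ^ 2 ≤ RCLike.re (A i i) * RCLike.re (A j j) := by
  have hdet := (hA.submatrix ![i, j]).det_nonneg
  rw [det_fin_two] at hdet
  simp only [submatrix_apply, Matrix.cons_val_zero, Matrix.cons_val_one] at hdet
  rw [← hA.1.apply j i, ← hA.1.coe_re_apply_self i, ← hA.1.coe_re_apply_self j,
    RCLike.star_def, RCLike.mul_conj] at hdet
  exact sub_nonneg.1 (by exact_mod_cast hdet)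

end Matrix.PosSemidef

namespace IsDensityOp

variable {d : Type*} [Fintype d] [DecidableEq d] {A : Matrix d d ℂ}

lemma re_apply_self_nonneg (hA : IsDensityOp A) (i : d) : 0 ≤ (A i i).re :=
  (Complex.nonneg_iff.1 hA.1.diag_nonneg).1

lemma re_apply_self_le_one (hA : IsDensityOp A) (i : d) : (A i i).re ≤ 1 := by
  have htrace : ∑ k, (A k k).re = 1 := by
    simpa [Matrix.trace, Complex.re_sum] using congrArg Complex.re hA.2
  rw [← htrace]
  exact Finset.single_le_sum (fun k _ => hA.re_apply_self_nonneg k) (Finset.mem_univ i)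

lemma norm_apply_le_one (hA : IsDensityOp A) (i j : d) : ‖A i j‖ ≤ 1 := by
  refine (pow_le_one_iff_of_nonneg (norm_nonneg _) two_ne_zero).1 ?_
  calc ‖A i j‖ ^ 2 ≤ (A i i).re * (A j j).re := hA.1.norm_apply_sq_le i j
    _ ≤ 1 := mul_le_one₀ (hA.re_apply_self_le_one i) (hA.re_apply_self_nonneg j)
        (hA.re_apply_self_le_one j)

end IsDensityOp

section RandomState

variable {Ω d : Type*} [Fintype d] {P : Ω → ℝ}

lemma summable_smul_of_isDensityOp [DecidableEq d] (hP : ∀ ω, 0 ≤ P ω) (hPs : Summable P)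
    {ρ : Ω → Matrix d d ℂ} (hρ : ∀ ω, IsDensityOp (ρ ω)) : Summable fun ω => P ω • ρ ω := by
  refine Pi.summable.2 fun i => Pi.summable.2 fun j => hPs.of_norm_bounded fun ω => ?_
  rw [Matrix.smul_apply, norm_smul, Real.norm_of_nonneg (hP ω)]
  exact mul_le_of_le_one_right (hP ω) ((hρ ω).norm_apply_le_one i j)

/-- This also holds when `Pr[E] = 0` (where `condExpState` is the junk value `0⁻¹ • _`), as `P`
then vanishes on `E`. -/
lemma prEvent_smul_condExpState (hP : ∀ ω, 0 ≤ P ω) (hPs : Summable P)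
    (ρ : Ω → Matrix d d ℂ) (E : Set Ω) :
    prEvent P E • condExpState P ρ E = ∑' ω, E.indicator (fun ω => P ω • ρ ω) ω := by
  by_cases hE : prEvent P E = 0
  · have hsum : HasSum (E.indicator P) (prEvent P E) := (hPs.indicator E).hasSum
    rw [hE] at hsum
    have hzero := (hasSum_zero_iff_of_nonneg (Set.indicator_nonneg fun ω _ => hP ω)).1 hsum
    simp only [hE, zero_smul, Set.indicator_smul_apply_left, hzero, Pi.zero_apply, tsum_zero]
  · exact smul_inv_smul₀ hE _

end RandomState

lemma tsum_indicator_preimage_finset {Ω 𝒵 M : Type*} [UniformSpace M] [AddCommGroup M]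
    [IsUniformAddGroup M] [CompleteSpace M] [T2Space M] {f : Ω → M} (hf : Summable f)
    (Z : Ω → 𝒵) (s : Finset 𝒵) :
    ∑' ω, {ω | Z ω ∈ s}.indicator f ω = ∑ z ∈ s, ∑' ω, {ω | Z ω = z}.indicator f ω := by
  classical
  rw [← Summable.tsum_finsetSum fun z _ => hf.indicator _]
  refine tsum_congr fun ω => ?_
  simp [Set.indicator_apply]

lemma sum_fiberwise_mul_sum_fiberwise {ι κ R : Type*} [Fintype ι] [Fintype κ] [DecidableEq κ]
    [NonUnitalNonAssocSemiring R] (h : ι → κ) (A : ι → R) :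
    ∑ t, (∑ z with h z = t, A z) * (∑ z with h z = t, A z)
      = ∑ z, ∑ z', if h z = h z' then A z * A z' else 0 := by
  calc ∑ t, (∑ z with h z = t, A z) * (∑ z with h z = t, A z)
      = ∑ t, ∑ z with h z = t, A z * ∑ z' with h z' = h z, A z' := by
        refine Finset.sum_congr rfl fun t _ => ?_
        rw [Finset.sum_mul]
        refine Finset.sum_congr rfl fun z hz => ?_
        rw [(Finset.mem_filter.1 hz).2]
    _ = ∑ z, A z * ∑ z' with h z' = h z, A z' := Finset.sum_fiberwise _ _ _
    _ = ∑ z, ∑ z', if h z = h z' then A z * A z' else 0 := by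
        simp_rw [Finset.mul_sum, Finset.sum_filter]
        exact Finset.sum_congr rfl fun z _ =>
          Finset.sum_congr rfl fun z' _ => if_congr eq_comm rfl rfl

lemma tsum_smul_sum_ite {Ω ι V : Type*} [Fintype ι] [AddCommMonoid V] [Module ℝ V]
    [TopologicalSpace V] [ContinuousAdd V] [ContinuousSMul ℝ V] [T2Space V]
    {Q : Ω → ℝ} (hQ : Summable Q) (p : ι → Ω → Prop) [∀ i ω, Decidable (p i ω)] (M : ι → V) :
    ∑' ω, Q ω • ∑ i, (if p i ω then M i else 0) = ∑ i, prEvent Q {ω | p i ω} • M i := by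
  calc ∑' ω, Q ω • ∑ i, (if p i ω then M i else 0)
      = ∑' ω, ∑ i, {ω | p i ω}.indicator Q ω • M i := by
        refine tsum_congr fun ω => ?_
        simp [Finset.smul_sum, Set.indicator_apply, ite_smul]
    _ = ∑ i, prEvent Q {ω | p i ω} • M i := by
        rw [Summable.tsum_finsetSum fun i _ => (hQ.indicator _).smul_const _]
        exact Finset.sum_congr rfl fun i _ => (hQ.indicator _).tsum_smul_const _

theorem stmt_10_general {Ω Ω' 𝒵 𝒮 d : Type*}
    [Fintype 𝒵] [Fintype 𝒮]
    [Fintype d] [DecidableEq d]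
    (P : Ω → ℝ) (hP : ∀ ω, 0 ≤ P ω) (hP1 : ∑' ω, P ω = 1)
    (Q : Ω' → ℝ) (hQ1 : ∑' ω', Q ω' = 1)
    (Z : Ω → 𝒵) (ρ : Ω → Matrix d d ℂ) (hρ : ∀ ω, IsDensityOp (ρ ω))
    (F : Ω' → 𝒵 → 𝒮) :
    (∑' ω', Q ω' • ∑ t : 𝒮, (prEvent P {ω | F ω' (Z ω) = t}) ^ 2 •
        (condExpState P ρ {ω | F ω' (Z ω) = t} * condExpState P ρ {ω | F ω' (Z ω) = t}))
      = ∑ z : 𝒵, ∑ z' : 𝒵,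
          (prEvent P {ω | Z ω = z} * prEvent P {ω | Z ω = z'} *
              prEvent Q {ω' | F ω' z = F ω' z'}) •
            (condExpState P ρ {ω | Z ω = z} * condExpState P ρ {ω | Z ω = z'}) := by
  classical
  have hPs : Summable P := .of_tsum_ne_zero (by simp [hP1])
  have hQs : Summable Q := .of_tsum_ne_zero (by simp [hQ1])
  set A : 𝒵 → Matrix d d ℂ := fun z => prEvent P {ω | Z ω = z} • condExpState P ρ {ω | Z ω = z}
  have hfiber : ∀ ω' t, prEvent P {ω | F ω' (Z ω) = t} • condExpState P ρ {ω | F ω' (Z ω) = t}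
      = ∑ z with F ω' z = t, A z := fun ω' t => by
    simp only [A, prEvent_smul_condExpState hP hPs]
    rw [← tsum_indicator_preimage_finset (summable_smul_of_isDensityOp hP hPs hρ)]
    simp
  calc _ = ∑' ω', Q ω' • ∑ z, ∑ z', if F ω' z = F ω' z' then A z * A z' else 0 := by
        refine tsum_congr fun ω' => congrArg (Q ω' • ·) ?_
        rw [← sum_fiberwise_mul_sum_fiberwise]
        refine Finset.sum_congr rfl fun t _ => ?_
        rw [← hfiber, sq, ← smul_mul_smul_comm]
    _ = ∑ z, ∑ z', prEvent Q {ω' | F ω' z = F ω' z'} • (A z * A z') := by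
        simpa only [Fintype.sum_prod_type] using
          tsum_smul_sum_ite hQs (fun (zz : 𝒵 × 𝒵) ω' => F ω' zz.1 = F ω' zz.2)
            fun zz => A zz.1 * A zz.2
    _ = _ := by
        simp only [A, smul_mul_smul_comm, smul_smul, mul_comm]

/-- The operator identity from the proof of Lemma 8:
`E_F[Σ_s Pr[F(Z)=s]² [ρ|F(Z)=s]²] = Σ_{z,z'} P_Z(z) P_Z(z') ρ_z ρ_{z'} Pr[F(z)=F(z')]`. -/
theorem stmt_10 {Ω Ω' 𝒵 𝒮 d : Type*} [Countable Ω] [Countable Ω']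
    [Fintype 𝒵] [DecidableEq 𝒵] [Fintype 𝒮] [DecidableEq 𝒮]
    [Fintype d] [DecidableEq d]
    (P : Ω → ℝ) (hP : ∀ ω, 0 ≤ P ω) (hP1 : ∑' ω, P ω = 1)
    (Q : Ω' → ℝ) (hQ : ∀ ω', 0 ≤ Q ω') (hQ1 : ∑' ω', Q ω' = 1)
    (Z : Ω → 𝒵) (ρ : Ω → Matrix d d ℂ) (hρ : ∀ ω, IsDensityOp (ρ ω))
    (F : Ω' → 𝒵 → 𝒮)
    (hF : ∀ z z' : 𝒵, z ≠ z' →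
      prEvent Q {ω' | F ω' z = F ω' z'} ≤ 1 / (Fintype.card 𝒮 : ℝ)) :
    (∑' ω', Q ω' • ∑ t : 𝒮, (prEvent P {ω | F ω' (Z ω) = t}) ^ 2 •
        (condExpState P ρ {ω | F ω' (Z ω) = t} * condExpState P ρ {ω | F ω' (Z ω) = t}))
      = ∑ z : 𝒵, ∑ z' : 𝒵,
          (prEvent P {ω | Z ω = z} * prEvent P {ω | Z ω = z'} *
              prEvent Q {ω' | F ω' z = F ω' z'}) •
            (condExpState P ρ {ω | Z ω = z} * condExpState P ρ {ω | Z ω = z'}) :=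
  stmt_10_general P hP hP1 Q hQ1 Z ρ hρ F
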